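/- [Modification identity, singleton preimage] Let h ∈ H_{r,n} and 1 ≤ j < r. Suppose h(j) = h(j+1), h(j) ≠ j+1, h(j)−1 ∈ [r], h(j−1) < h(j) when j ≥ 2, and there is exactly one j_0 ∈ [r] with h(j_0) = j (necessarily j_0 < j). Define A, B, C ∈ H_{r,n} by: A(i) = h(i) for i ∉ {j_0, j}, A(j_0) = j+1, A(j) = h(j)−1; B(i) = h(i) for i ∉ {j, j+1}, B(j) = B(j+1) = h(j)−1; C(i) = h(i) for i ∉ {j_0, j}, C(j_0) = j−1, C(j) = h(j)−1. Then for every N ≥ 1, csf_q^N(h) = csf_q^N(A) − q · csf_q^N(B) + q · csf_q^N(C). (This is formula (76) of Proposition 73(2), expressed via chromatic quasisymmetric functions using the paper's generalized Shareshian–Wachs theorem.) -/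
import Mathlib


namespace GenHess

open scoped Classical

noncomputable section

/-- The vertex set `I ∪ {n}` of the weighted graph of a generalized Hessenberg function. -/
def verts (n : ℕ) (I : Finset ℕ) : Finset ℕ := insert n I

/-- `h : I ∪ {n} → I ∪ {n}` is a generalized Hessenberg function for `(I, n)`,
with `I ⊆ {1, …, n-1}`, `h i ≥ i`, and `h` weakly increasing on `I ∪ {n}`. -/
def IsGenHess (n : ℕ) (I : Finset ℕ) (h : ℕ → ℕ) : Prop :=
  (∀ i ∈ I, 1 ≤ i ∧ i ≤ n - 1) ∧
  (∀ i ∈ verts n I, h i ∈ verts n I) ∧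
  (∀ i ∈ verts n I, i ≤ h i) ∧
  (∀ i ∈ verts n I, ∀ j ∈ verts n I, i ≤ j → h i ≤ h j)

/-- The weight `w_h(i_k) = i_k - i_{k-1}` of a vertex: `v` minus the largest vertex
below `v` (or `0` if there is none). -/
def wt (n : ℕ) (I : Finset ℕ) (v : ℕ) : ℕ :=
  v - ((verts n I).filter (fun u => u < v)).sup id

/-- A proper coloring of the weighted graph `(Γ_h, w_h)` with colors in `[N]`:
each vertex `v` gets a set of colors of size `w_h(v)`, and adjacent vertices get
disjoint color sets (there is an edge `{i,j}` whenever `i < j ≤ h i`). -/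
def IsProper {N : ℕ} (n : ℕ) (I : Finset ℕ) (h : ℕ → ℕ)
    (γ : {x // x ∈ verts n I} → Finset (Fin N)) : Prop :=
  (∀ v : {x // x ∈ verts n I}, (γ v).card = wt n I v.val) ∧
  ∀ v u : {x // x ∈ verts n I}, v.val < u.val → u.val ≤ h v.val → Disjoint (γ v) (γ u)

/-- The ascent statistic `asc_h(γ) = Σ_{edges i<j} #{(a,b) ∈ γ(i)×γ(j) : a < b}`. -/
def asc {N : ℕ} (n : ℕ) (I : Finset ℕ) (h : ℕ → ℕ)
    (γ : {x // x ∈ verts n I} → Finset (Fin N)) : ℕ :=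
  ∑ v : {x // x ∈ verts n I}, ∑ u : {x // x ∈ verts n I},
    if v.val < u.val ∧ u.val ≤ h v.val then
      ((γ v ×ˢ γ u).filter fun ab => ab.1 < ab.2).card
    else 0

/-- The truncated chromatic quasisymmetric function `csf_q^N(h)`, as an element of
`ℤ[x_1,…,x_N][q]` (the outer `Polynomial.X` is `q`). -/
def csf (n : ℕ) (I : Finset ℕ) (h : ℕ → ℕ) (N : ℕ) :
    Polynomial (MvPolynomial (Fin N) ℤ) :=
  ∑ γ ∈ Finset.univ.filter
      (fun γ : {x // x ∈ verts n I} → Finset (Fin N) => IsProper n I h γ),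
    Polynomial.C (∏ v : {x // x ∈ verts n I}, ∏ a ∈ γ v, MvPolynomial.X a) *
      Polynomial.X ^ asc n I h γ

/-- The `q`-integer `[m]_q = 1 + q + ⋯ + q^{m-1}`. -/
def qNum (R : Type) [CommRing R] (m : ℕ) : Polynomial R :=
  ∑ i ∈ Finset.range m, Polynomial.X ^ i

/-- The `q`-factorial `[m]_q!`. -/
def qFact (R : Type) [CommRing R] : ℕ → Polynomial R
  | 0 => 1
  | m + 1 => qNum R (m + 1) * qFact R m

/-- The elementary symmetric polynomial `e_m(x_1,…,x_N)`, viewed as a constant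
polynomial in `q`. -/
def esym (N m : ℕ) : Polynomial (MvPolynomial (Fin N) ℤ) :=
  Polynomial.C (MvPolynomial.esymm (Fin N) ℤ m)

end

end GenHess


namespace GenHess
open scoped Classical
noncomputable section


/-- indicator of `x ≠ y` in a ring -/
def chi (R : Type*) [CommRing R] (x y : ℕ) : R := if x ≠ y then 1 else 0
/-- indicator of `x < y` in `ℕ` -/
def iota (x y : ℕ) : ℕ := if x < y then 1 else 0

def G1 {R : Type*} [CommRing R] (q M : R) (a b c d : ℕ) (s : ℕ) : R :=
    chi R a b * chi R b d * chi R c d * (M * q ^ (s + (iota a b + iota b d + iota c d)))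
      + q * (chi R a b * (M * q ^ (s + iota a b)))
      - chi R a b * chi R a c * chi R c d * (M * q ^ (s + (iota a b + iota a c + iota c d)))
      - q * (chi R c d * (M * q ^ (s + iota c d)))

set_option maxHeartbeats 4000000 in
theorem local_aux {R : Type*} [CommRing R] (q M : R) (a b c d : ℕ) (hcb : c < b) (s : ℕ) :
    G1 q M a b c d s + G1 q M a c b d (s+1) = 0 := by
  unfold G1 chi iota
  split_ifs <;> first | (exfalso; omega) | ring1

theorem local_id {R : Type*} [CommRing R] (q M : R) (a b c d : ℕ) (hbc : b ≠ c) (s s' : ℕ)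
    (hss : s' + iota b c = s + iota c b) :
    G1 q M a b c d s + G1 q M a c b d s' = 0 := by
  rcases Nat.lt_or_ge b c with hlt | hge
  · rw [iota, if_pos hlt, iota, if_neg (by omega)] at hss
    obtain rfl : s = s' + 1 := by omega
    rw [add_comm]
    exact local_aux q M a c b d hlt s'
  · have hlt : c < b := by omega
    rw [iota, if_neg (by omega), iota, if_pos hlt] at hss
    obtain rfl : s' = s + 1 := by omega
    exact local_aux q M a b c d hlt s

theorem ite3_chi {R : Type*} [CommRing R] {x1 y1 x2 y2 x3 y3 : ℕ} (M : R) :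
    (if x1 ≠ y1 ∧ x2 ≠ y2 ∧ x3 ≠ y3 then M else 0)
      = chi R x1 y1 * chi R x2 y2 * chi R x3 y3 * M := by
  unfold chi; split_ifs <;> first | ring1 | simp_all

theorem ite1_chi {R : Type*} [CommRing R] {x y : ℕ} (M : R) :
    (if x ≠ y then M else 0) = chi R x y * M := by
  unfold chi; split_ifs <;> first | ring1 | simp_all

theorem ite_or_add {p q r : Prop} [Decidable p] [Decidable q] [Decidable r]
    (h : p ↔ q ∨ r) (hqr : ¬(q ∧ r)) (t : ℕ) :
    (if p then t else 0) = (if q then t else 0) + (if r then t else 0) := by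
  by_cases hq : q
  · rw [if_pos hq, if_pos (h.mpr (Or.inl hq)), if_neg (fun hr => hqr ⟨hq, hr⟩), add_zero]
  · by_cases hr : r
    · rw [if_pos (h.mpr (Or.inr hr)), if_neg hq, if_pos hr, zero_add]
    · rw [if_neg hq, if_neg hr, if_neg (fun hp => ((h.mp hp).elim hq hr)), add_zero]

theorem ite_or_add3 {pbig p1 p2 p3 : Prop} {_h : Decidable pbig} [Decidable p1] [Decidable p2]
    [Decidable p3] (h : pbig ↔ (p1 ∨ (p2 ∨ p3))) (hx1 : ¬(p1 ∧ (p2 ∨ p3))) (hx2 : ¬(p2 ∧ p3))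
    (t : ℕ) :
    (if pbig then t else 0)
      = (if p1 then t else 0) + ((if p2 then t else 0) + (if p3 then t else 0)) := by
  by_cases a : p1 <;> by_cases b : p2 <;> by_cases c : p3 <;> simp_all

theorem ite_or_add1 {pbig p1 : Prop} {_h : Decidable pbig} [Decidable p1]
    (h : pbig ↔ p1) (t : ℕ) :
    (if pbig then t else 0) = (if p1 then t else 0) := by
  by_cases a : p1 <;> simp_all

theorem ite_sw {cbig c p1 p2 : Prop} [Decidable cbig] [Decidable c] [Decidable p1] [Decidable p2]
    (hck : cbig ↔ ((c ∧ ¬p1) ∨ p2)) (h1 : p1 → c) (h2 : p2 → ¬c) (h3 : ¬(p1 ∧ p2)) (t : ℕ) :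
    (if cbig then t else 0) + (if p1 then t else 0)
      = (if c then t else 0) + (if p2 then t else 0) := by
  by_cases hp1 : p1 <;> by_cases hp2 : p2 <;> by_cases hc : c <;> simp_all

theorem sum_ite_pair_val {s : Finset ℕ} (p q : ℕ) (hp : p ∈ s) (hq : q ∈ s)
    {inst : ∀ v u : {x // x ∈ s}, Decidable ((v : ℕ) = p ∧ (u : ℕ) = q)}
    (t : {x // x ∈ s} → {x // x ∈ s} → ℕ) :
    (∑ v : {x // x ∈ s}, ∑ u : {x // x ∈ s}, if (v : ℕ) = p ∧ (u : ℕ) = q then t v u else 0)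
      = t ⟨p, hp⟩ ⟨q, hq⟩ := by
  have hiff : ∀ v u : {x // x ∈ s}, ((v : ℕ) = p ∧ (u : ℕ) = q) ↔ (v = ⟨p, hp⟩ ∧ u = ⟨q, hq⟩) := by
    intro v u
    constructor
    · rintro ⟨e1, e2⟩; exact ⟨Subtype.ext e1, Subtype.ext e2⟩
    · rintro ⟨rfl, rfl⟩; exact ⟨rfl, rfl⟩
  simp only [hiff]
  have h1 : ∀ v : {x // x ∈ s},
      (∑ u : {x // x ∈ s}, if v = ⟨p, hp⟩ ∧ u = ⟨q, hq⟩ then t v u else 0)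
        = if v = ⟨p, hp⟩ then t v ⟨q, hq⟩ else 0 := by
    intro v
    by_cases hv : v = ⟨p, hp⟩
    · simp only [hv, true_and]
      rw [Finset.sum_ite_eq' Finset.univ (⟨q, hq⟩ : {x // x ∈ s}) (t ⟨p, hp⟩)]
      simp
    · simp [hv]
  rw [Finset.sum_congr rfl fun v _ => h1 v,
    Finset.sum_ite_eq' Finset.univ (⟨p, hp⟩ : {x // x ∈ s}) (fun v => t v ⟨q, hq⟩)]
  simp

theorem asc_split (n : ℕ) (I : Finset ℕ) (G G0 : ℕ → ℕ) {N : ℕ}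
    (γ : {x // x ∈ verts n I} → Finset (Fin N))
    (P : {x // x ∈ verts n I} → {x // x ∈ verts n I} → Prop)
    (hiff : ∀ v u : {x // x ∈ verts n I},
      ((v : ℕ) < u ∧ (u : ℕ) ≤ G v) ↔ (((v : ℕ) < u ∧ (u : ℕ) ≤ G0 v) ∨ P v u))
    (hnot : ∀ v u : {x // x ∈ verts n I}, ¬(((v : ℕ) < u ∧ (u : ℕ) ≤ G0 v) ∧ P v u)) :
    asc n I G γ = asc n I G0 γ +
      ∑ v : {x // x ∈ verts n I}, ∑ u : {x // x ∈ verts n I},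
        (if P v u then ((γ v ×ˢ γ u).filter fun ab => ab.1 < ab.2).card else 0) := by
  unfold asc
  rw [← Finset.sum_add_distrib]
  refine Finset.sum_congr rfl fun v _ => ?_
  rw [← Finset.sum_add_distrib]
  refine Finset.sum_congr rfl fun u _ => ?_
  exact ite_or_add (hiff v u) (hnot v u) _

theorem proper_split (n : ℕ) (I : Finset ℕ) (G G0 : ℕ → ℕ) {N : ℕ}
    (γ : {x // x ∈ verts n I} → Finset (Fin N))
    (P : {x // x ∈ verts n I} → {x // x ∈ verts n I} → Prop)
    (hiff : ∀ v u : {x // x ∈ verts n I},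
      ((v : ℕ) < u ∧ (u : ℕ) ≤ G v) ↔ (((v : ℕ) < u ∧ (u : ℕ) ≤ G0 v) ∨ P v u)) :
    IsProper n I G γ ↔ (IsProper n I G0 γ ∧ ∀ v u, P v u → Disjoint (γ v) (γ u)) := by
  unfold IsProper
  constructor
  · rintro ⟨hcard, hdis⟩
    refine ⟨⟨hcard, fun v u h1 h2 => ?_⟩, fun v u hp => ?_⟩
    · have := (hiff v u).mpr (Or.inl ⟨h1, h2⟩)
      exact hdis v u this.1 this.2
    · have := (hiff v u).mpr (Or.inr hp)
      exact hdis v u this.1 this.2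
  · rintro ⟨⟨hcard, hdis0⟩, hdisP⟩
    refine ⟨hcard, fun v u h1 h2 => ?_⟩
    rcases (hiff v u).mp ⟨h1, h2⟩ with ⟨h1', h2'⟩ | hp
    · exact hdis0 v u h1' h2'
    · exact hdisP v u hp

theorem csf_eq (n : ℕ) (I : Finset ℕ) (G G0 : ℕ → ℕ) (N : ℕ)
    (D : ({x // x ∈ verts n I} → Finset (Fin N)) → Prop)
    (e : ({x // x ∈ verts n I} → Finset (Fin N)) → ℕ)
    (hprop : ∀ γ, IsProper n I G γ ↔ (IsProper n I G0 γ ∧ D γ))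
    (hasc : ∀ γ, IsProper n I G γ → asc n I G γ = asc n I G0 γ + e γ) :
    csf n I G N = ∑ γ ∈ Finset.univ.filter
        (fun γ : {x // x ∈ verts n I} → Finset (Fin N) => IsProper n I G0 γ),
      (if D γ then Polynomial.C (∏ v : {x // x ∈ verts n I}, ∏ a ∈ γ v, MvPolynomial.X a) *
          Polynomial.X ^ (asc n I G0 γ + e γ) else 0) := by
  unfold csf
  calc (∑ γ ∈ Finset.univ.filter
        (fun γ : {x // x ∈ verts n I} → Finset (Fin N) => IsProper n I G γ),
      Polynomial.C (∏ v : {x // x ∈ verts n I}, ∏ a ∈ γ v, MvPolynomial.X a) *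
        Polynomial.X ^ asc n I G γ)
      = ∑ γ ∈ Finset.univ.filter
          (fun γ : {x // x ∈ verts n I} → Finset (Fin N) => IsProper n I G0 γ ∧ D γ),
        Polynomial.C (∏ v : {x // x ∈ verts n I}, ∏ a ∈ γ v, MvPolynomial.X a) *
          Polynomial.X ^ (asc n I G0 γ + e γ) := by
        refine Finset.sum_congr ?_ fun γ hγ => ?_
        · apply Finset.filter_congr
          intro γ _
          simp only [hprop γ]
        · have hγ' := (Finset.mem_filter.mp hγ).2
          rw [hasc γ ((hprop γ).mpr hγ')]
    _ = _ := by
        rw [← Finset.filter_filter, Finset.sum_filter]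

end
end GenHess

open GenHess

set_option maxHeartbeats 1600000 in
/-- Proposition 73(2), eq. (76): modification identity with singleton preimage:
`csf(h) = csf(A) - q csf(B) + q csf(C)` where
`A j₀ = j+1, A j = h j - 1`; `B j = B (j+1) = h j - 1`; `C j₀ = j-1, C j = h j - 1`. -/
theorem csf_modification_singleton (n r : ℕ) (h : ℕ → ℕ)
    (hgen : IsGenHess n (Finset.Icc 1 r) h)
    (j : ℕ) (hj1 : 1 ≤ j) (hjr : j < r)
    (hval : h j = h (j + 1)) (hne : h j ≠ j + 1)
    (hhr : h j - 1 ∈ Finset.Icc 1 r)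
    (hprev : 2 ≤ j → h (j - 1) < h j)
    (j0 : ℕ) (hj0 : j0 ∈ Finset.Icc 1 r) (hj0v : h j0 = j)
    (huniq : ∀ i ∈ Finset.Icc 1 r, h i = j → i = j0)
    (N : ℕ) (hN : 1 ≤ N) :
    csf n (Finset.Icc 1 r) h N =
      csf n (Finset.Icc 1 r)
        (fun i => if i = j0 then j + 1 else if i = j then h j - 1 else h i) N -
      Polynomial.X * csf n (Finset.Icc 1 r)
        (fun i => if i = j ∨ i = j + 1 then h j - 1 else h i) N +
      Polynomial.X * csf n (Finset.Icc 1 r)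
        (fun i => if i = j0 then j - 1 else if i = j then h j - 1 else h i) N := by
  classical
  obtain ⟨hIb, hmap, hge, hmono⟩ := hgen
  have hr2 : 2 ≤ r := by omega
  have hrn : r + 1 ≤ n := by
    have := hIb r (Finset.mem_Icc.mpr ⟨by omega, le_rfl⟩)
    omega
  have memV : ∀ v, 1 ≤ v → v ≤ r → v ∈ verts n (Finset.Icc 1 r) := fun v h1 h2 =>
    Finset.mem_insert_of_mem (Finset.mem_Icc.mpr ⟨h1, h2⟩)
  have memV_iff : ∀ v, v ∈ verts n (Finset.Icc 1 r) ↔ (v = n ∨ (1 ≤ v ∧ v ≤ r)) := by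
    intro v; simp [verts, Finset.mem_insert, Finset.mem_Icc]
  have hjV : j ∈ verts n (Finset.Icc 1 r) := memV j (by omega) (by omega)
  have hj1V : j + 1 ∈ verts n (Finset.Icc 1 r) := memV _ (by omega) (by omega)
  have hj0IC := Finset.mem_Icc.mp hj0
  have hj0V : j0 ∈ verts n (Finset.Icc 1 r) := memV _ (by omega) (by omega)
  have hmV : h j ∈ verts n (Finset.Icc 1 r) := hmap j hjV
  have hmIC := Finset.mem_Icc.mp hhr
  have hm2 : j + 2 ≤ h j := by
    have h1 : j + 1 ≤ h (j + 1) := hge _ hj1V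
    omega
  have hmr : h j ≤ r + 1 := by omega
  have hj0j : j0 < j := by
    by_contra hcon
    have h2 := hmono j hjV j0 hj0V (by omega)
    omega
  have hj2 : 2 ≤ j := by omega
  -- weights
  have wt_small : ∀ v, 1 ≤ v → v ≤ r → wt n (Finset.Icc 1 r) v = 1 := by
    intro v h1 h2
    have hsup : ((verts n (Finset.Icc 1 r)).filter (fun u => u < v)).sup id = v - 1 := by
      apply le_antisymm
      · apply Finset.sup_le
        intro u hu
        have h3 := (Finset.mem_filter.mp hu).2
        simp only [id_eq]
        omega
      · rcases Nat.lt_or_ge v 2 with hv | hv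
        · have he : v - 1 = 0 := by omega
          rw [he]; exact Nat.zero_le _
        · have hmem : v - 1 ∈ (verts n (Finset.Icc 1 r)).filter (fun u => u < v) :=
            Finset.mem_filter.mpr ⟨memV _ (by omega) (by omega), by omega⟩
          exact Finset.le_sup (f := id) hmem
    rw [wt, hsup]; omega
  have wt_jj : wt n (Finset.Icc 1 r) j = 1 := wt_small j (by omega) (by omega)
  have wt_j1 : wt n (Finset.Icc 1 r) (j + 1) = 1 := wt_small _ (by omega) (by omega)
  have wt_j0 : wt n (Finset.Icc 1 r) j0 = 1 := wt_small _ (by omega) (by omega)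
  have wt_m : wt n (Finset.Icc 1 r) (h j) = 1 := by
    rcases (memV_iff (h j)).mp hmV with he | ⟨ha, hb⟩
    · rw [he]
      have hsup : ((verts n (Finset.Icc 1 r)).filter (fun u => u < n)).sup id = r := by
        apply le_antisymm
        · apply Finset.sup_le
          intro u hu
          have h3 := Finset.mem_filter.mp hu
          rcases (memV_iff u).mp h3.1 with rfl | ⟨_, hb2⟩
          · exact absurd h3.2 (lt_irrefl _)
          · simpa using hb2
        · exact Finset.le_sup (f := id)
            (Finset.mem_filter.mpr ⟨memV r (by omega) le_rfl, by omega⟩)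
      rw [wt, hsup]; omega
    · exact wt_small _ ha hb
  -- the common refinement h0
  set h0 : ℕ → ℕ := fun i => if i = j0 then j - 1 else if i = j ∨ i = j + 1 then h j - 1 else h i
    with h0def
  have h0j0 : h0 j0 = j - 1 := by simp [h0def]
  have h0j : h0 j = h j - 1 := by simp [h0def, show j ≠ j0 from by omega]
  have h0j1 : h0 (j + 1) = h j - 1 := by simp [h0def, show j + 1 ≠ j0 from by omega]
  have h0o : ∀ v, v ≠ j0 → v ≠ j → v ≠ j + 1 → h0 v = h v := by
    intro v a b c; simp only [h0def]; rw [if_neg a, if_neg (by tauto)]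
  -- the modified functions
  set hA : ℕ → ℕ := fun i => if i = j0 then j + 1 else if i = j then h j - 1 else h i with hAdef
  set hB : ℕ → ℕ := fun i => if i = j ∨ i = j + 1 then h j - 1 else h i with hBdef
  set hC : ℕ → ℕ := fun i => if i = j0 then j - 1 else if i = j then h j - 1 else h i with hCdef
  have hAj0 : hA j0 = j + 1 := by simp [hAdef]
  have hAj : hA j = h j - 1 := by simp [hAdef, show j ≠ j0 from by omega]
  have hAj1 : hA (j + 1) = h j := by
    simp [hAdef, show j + 1 ≠ j0 from by omega, show j + 1 ≠ j from by omega]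
    exact hval.symm
  have hAo : ∀ v, v ≠ j0 → v ≠ j → hA v = h v := by
    intro v a b; simp only [hAdef]; rw [if_neg a, if_neg b]
  have hBj0 : hB j0 = j := by
    simp [hBdef, show j0 ≠ j from by omega, show j0 ≠ j + 1 from by omega]
    exact hj0v
  have hBj : hB j = h j - 1 := by simp [hBdef]
  have hBj1 : hB (j + 1) = h j - 1 := by simp [hBdef]
  have hBo : ∀ v, v ≠ j → v ≠ j + 1 → hB v = h v := by
    intro v a b; simp only [hBdef]; rw [if_neg (by tauto)]
  have hCj0 : hC j0 = j - 1 := by simp [hCdef]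
  have hCj : hC j = h j - 1 := by simp [hCdef, show j ≠ j0 from by omega]
  have hCj1 : hC (j + 1) = h j := by
    simp [hCdef, show j + 1 ≠ j0 from by omega, show j + 1 ≠ j from by omega]
    exact hval.symm
  have hCo : ∀ v, v ≠ j0 → v ≠ j → hC v = h v := by
    intro v a b; simp only [hCdef]; rw [if_neg a, if_neg b]
  -- no vertex below j has h0-value j
  have hneJ : ∀ v : {x // x ∈ verts n (Finset.Icc 1 r)}, (v : ℕ) < j → h0 (v : ℕ) ≠ j := by
    intro v hlt
    by_cases hv0 : (v : ℕ) = j0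
    · rw [hv0, h0j0]; omega
    · rw [h0o _ hv0 (by omega) (by omega)]
      intro hcon
      have hvI : (v : ℕ) ∈ Finset.Icc 1 r := by
        rcases (memV_iff _).mp v.2 with he | ⟨ha, hb⟩
        · exfalso; omega
        · exact Finset.mem_Icc.mpr ⟨ha, hb⟩
      exact hv0 (huniq _ hvI hcon)
  -- edge-set comparisons
  have hiffh : ∀ v u : {x // x ∈ verts n (Finset.Icc 1 r)},
      ((v : ℕ) < u ∧ (u : ℕ) ≤ h (v : ℕ)) ↔ (((v : ℕ) < u ∧ (u : ℕ) ≤ h0 (v : ℕ)) ∨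
        (((v : ℕ) = j0 ∧ (u : ℕ) = j) ∨ ((v : ℕ) = j ∧ (u : ℕ) = h j) ∨
          ((v : ℕ) = j + 1 ∧ (u : ℕ) = h j))) := by
    intro v u
    rcases eq_or_ne (v : ℕ) j0 with hv0 | hv0
    · rw [hv0, hj0v, h0j0]; omega
    · rcases eq_or_ne (v : ℕ) j with hvj | hvj
      · rw [hvj, h0j]; omega
      · rcases eq_or_ne (v : ℕ) (j + 1) with hvj1 | hvj1
        · rw [hvj1, ← hval, h0j1]; omega
        · rw [h0o _ hv0 hvj hvj1]; omega
  have hiffA : ∀ v u : {x // x ∈ verts n (Finset.Icc 1 r)},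
      ((v : ℕ) < u ∧ (u : ℕ) ≤ hA (v : ℕ)) ↔ (((v : ℕ) < u ∧ (u : ℕ) ≤ h0 (v : ℕ)) ∨
        (((v : ℕ) = j0 ∧ (u : ℕ) = j) ∨ ((v : ℕ) = j0 ∧ (u : ℕ) = j + 1) ∨
          ((v : ℕ) = j + 1 ∧ (u : ℕ) = h j))) := by
    intro v u
    rcases eq_or_ne (v : ℕ) j0 with hv0 | hv0
    · rw [hv0, hAj0, h0j0]; omega
    · rcases eq_or_ne (v : ℕ) j with hvj | hvj
      · rw [hvj, hAj, h0j]; omega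
      · rcases eq_or_ne (v : ℕ) (j + 1) with hvj1 | hvj1
        · rw [hvj1, hAj1, h0j1]; omega
        · rw [hAo _ hv0 hvj, h0o _ hv0 hvj hvj1]; omega
  have hiffB : ∀ v u : {x // x ∈ verts n (Finset.Icc 1 r)},
      ((v : ℕ) < u ∧ (u : ℕ) ≤ hB (v : ℕ)) ↔ (((v : ℕ) < u ∧ (u : ℕ) ≤ h0 (v : ℕ)) ∨
        ((v : ℕ) = j0 ∧ (u : ℕ) = j)) := by
    intro v u
    rcases eq_or_ne (v : ℕ) j0 with hv0 | hv0
    · rw [hv0, hBj0, h0j0]; omega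
    · rcases eq_or_ne (v : ℕ) j with hvj | hvj
      · rw [hvj, hBj, h0j]; omega
      · rcases eq_or_ne (v : ℕ) (j + 1) with hvj1 | hvj1
        · rw [hvj1, hBj1, h0j1]; omega
        · rw [hBo _ hvj hvj1, h0o _ hv0 hvj hvj1]; omega
  have hiffC : ∀ v u : {x // x ∈ verts n (Finset.Icc 1 r)},
      ((v : ℕ) < u ∧ (u : ℕ) ≤ hC (v : ℕ)) ↔ (((v : ℕ) < u ∧ (u : ℕ) ≤ h0 (v : ℕ)) ∨
        ((v : ℕ) = j + 1 ∧ (u : ℕ) = h j)) := by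
    intro v u
    rcases eq_or_ne (v : ℕ) j0 with hv0 | hv0
    · rw [hv0, hCj0, h0j0]; omega
    · rcases eq_or_ne (v : ℕ) j with hvj | hvj
      · rw [hvj, hCj, h0j]; omega
      · rcases eq_or_ne (v : ℕ) (j + 1) with hvj1 | hvj1
        · rw [hvj1, hCj1, h0j1]; omega
        · rw [hCo _ hv0 hvj, h0o _ hv0 hvj hvj1]; omega
  -- extra edges are not h0-edges
  have hnoth : ∀ v u : {x // x ∈ verts n (Finset.Icc 1 r)},
      ¬(((v : ℕ) < u ∧ (u : ℕ) ≤ h0 (v : ℕ)) ∧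
        (((v : ℕ) = j0 ∧ (u : ℕ) = j) ∨ ((v : ℕ) = j ∧ (u : ℕ) = h j) ∨
          ((v : ℕ) = j + 1 ∧ (u : ℕ) = h j))) := by
    rintro v u ⟨⟨h1, h2⟩, (⟨e1, e2⟩ | ⟨e1, e2⟩ | ⟨e1, e2⟩)⟩
    · rw [e1, h0j0] at h2; omega
    · rw [e1, h0j] at h2; omega
    · rw [e1, h0j1] at h2; omega
  have hnotA : ∀ v u : {x // x ∈ verts n (Finset.Icc 1 r)},
      ¬(((v : ℕ) < u ∧ (u : ℕ) ≤ h0 (v : ℕ)) ∧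
        (((v : ℕ) = j0 ∧ (u : ℕ) = j) ∨ ((v : ℕ) = j0 ∧ (u : ℕ) = j + 1) ∨
          ((v : ℕ) = j + 1 ∧ (u : ℕ) = h j))) := by
    rintro v u ⟨⟨h1, h2⟩, (⟨e1, e2⟩ | ⟨e1, e2⟩ | ⟨e1, e2⟩)⟩
    · rw [e1, h0j0] at h2; omega
    · rw [e1, h0j0] at h2; omega
    · rw [e1, h0j1] at h2; omega
  have hnotB : ∀ v u : {x // x ∈ verts n (Finset.Icc 1 r)},
      ¬(((v : ℕ) < u ∧ (u : ℕ) ≤ h0 (v : ℕ)) ∧ ((v : ℕ) = j0 ∧ (u : ℕ) = j)) := by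
    rintro v u ⟨⟨h1, h2⟩, ⟨e1, e2⟩⟩
    rw [e1, h0j0] at h2; omega
  have hnotC : ∀ v u : {x // x ∈ verts n (Finset.Icc 1 r)},
      ¬(((v : ℕ) < u ∧ (u : ℕ) ≤ h0 (v : ℕ)) ∧ ((v : ℕ) = j + 1 ∧ (u : ℕ) = h j)) := by
    rintro v u ⟨⟨h1, h2⟩, ⟨e1, e2⟩⟩
    rw [e1, h0j1] at h2; omega

  -- explicit extra-ascent sums
  have eascH : ∀ γ : {x // x ∈ verts n (Finset.Icc 1 r)} → Finset (Fin N),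
      asc n (Finset.Icc 1 r) h γ = asc n (Finset.Icc 1 r) h0 γ +
        (((γ ⟨j0, hj0V⟩ ×ˢ γ ⟨j, hjV⟩).filter fun ab => ab.1 < ab.2).card +
          ((((γ ⟨j, hjV⟩ ×ˢ γ ⟨h j, hmV⟩).filter fun ab => ab.1 < ab.2).card) +
            (((γ ⟨j + 1, hj1V⟩ ×ˢ γ ⟨h j, hmV⟩).filter fun ab => ab.1 < ab.2).card))) := by
    intro γ
    have e1 : (∑ v : {x // x ∈ verts n (Finset.Icc 1 r)},
        ∑ u : {x // x ∈ verts n (Finset.Icc 1 r)},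
        if (v : ℕ) = j0 ∧ (u : ℕ) = j then ((γ v ×ˢ γ u).filter fun ab => ab.1 < ab.2).card else 0)
        = ((γ ⟨j0, hj0V⟩ ×ˢ γ ⟨j, hjV⟩).filter fun ab => ab.1 < ab.2).card :=
      sum_ite_pair_val j0 j hj0V hjV _
    have e2 : (∑ v : {x // x ∈ verts n (Finset.Icc 1 r)},
        ∑ u : {x // x ∈ verts n (Finset.Icc 1 r)},
        if (v : ℕ) = j ∧ (u : ℕ) = h j then ((γ v ×ˢ γ u).filter fun ab => ab.1 < ab.2).card else 0)
        = ((γ ⟨j, hjV⟩ ×ˢ γ ⟨h j, hmV⟩).filter fun ab => ab.1 < ab.2).card :=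
      sum_ite_pair_val j (h j) hjV hmV _
    have e3 : (∑ v : {x // x ∈ verts n (Finset.Icc 1 r)},
        ∑ u : {x // x ∈ verts n (Finset.Icc 1 r)},
        if (v : ℕ) = j + 1 ∧ (u : ℕ) = h j then ((γ v ×ˢ γ u).filter fun ab => ab.1 < ab.2).card else 0)
        = ((γ ⟨j + 1, hj1V⟩ ×ˢ γ ⟨h j, hmV⟩).filter fun ab => ab.1 < ab.2).card :=
      sum_ite_pair_val (j + 1) (h j) hj1V hmV _
    rw [asc_split n (Finset.Icc 1 r) h h0 γ _ hiffh hnoth]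
    congr 1
    refine Eq.trans (Finset.sum_congr rfl (fun v _ => Finset.sum_congr rfl (fun u _ =>
      ite_or_add3 Iff.rfl
        (by rintro ⟨⟨f1, f2⟩, (⟨g1, g2⟩ | ⟨g1, g2⟩)⟩ <;> omega)
        (by rintro ⟨⟨f1, f2⟩, ⟨g1, g2⟩⟩; omega) _))) ?_
    simp only [Finset.sum_add_distrib]
    rw [e1, e2, e3]
  have eascA : ∀ γ : {x // x ∈ verts n (Finset.Icc 1 r)} → Finset (Fin N),
      asc n (Finset.Icc 1 r) hA γ = asc n (Finset.Icc 1 r) h0 γ +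
        (((γ ⟨j0, hj0V⟩ ×ˢ γ ⟨j, hjV⟩).filter fun ab => ab.1 < ab.2).card +
          ((((γ ⟨j0, hj0V⟩ ×ˢ γ ⟨j + 1, hj1V⟩).filter fun ab => ab.1 < ab.2).card) +
            (((γ ⟨j + 1, hj1V⟩ ×ˢ γ ⟨h j, hmV⟩).filter fun ab => ab.1 < ab.2).card))) := by
    intro γ
    have e1 : (∑ v : {x // x ∈ verts n (Finset.Icc 1 r)},
        ∑ u : {x // x ∈ verts n (Finset.Icc 1 r)},
        if (v : ℕ) = j0 ∧ (u : ℕ) = j then ((γ v ×ˢ γ u).filter fun ab => ab.1 < ab.2).card else 0)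
        = ((γ ⟨j0, hj0V⟩ ×ˢ γ ⟨j, hjV⟩).filter fun ab => ab.1 < ab.2).card :=
      sum_ite_pair_val j0 j hj0V hjV _
    have e2 : (∑ v : {x // x ∈ verts n (Finset.Icc 1 r)},
        ∑ u : {x // x ∈ verts n (Finset.Icc 1 r)},
        if (v : ℕ) = j0 ∧ (u : ℕ) = j + 1 then ((γ v ×ˢ γ u).filter fun ab => ab.1 < ab.2).card else 0)
        = ((γ ⟨j0, hj0V⟩ ×ˢ γ ⟨j + 1, hj1V⟩).filter fun ab => ab.1 < ab.2).card :=
      sum_ite_pair_val j0 (j + 1) hj0V hj1V _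
    have e3 : (∑ v : {x // x ∈ verts n (Finset.Icc 1 r)},
        ∑ u : {x // x ∈ verts n (Finset.Icc 1 r)},
        if (v : ℕ) = j + 1 ∧ (u : ℕ) = h j then ((γ v ×ˢ γ u).filter fun ab => ab.1 < ab.2).card else 0)
        = ((γ ⟨j + 1, hj1V⟩ ×ˢ γ ⟨h j, hmV⟩).filter fun ab => ab.1 < ab.2).card :=
      sum_ite_pair_val (j + 1) (h j) hj1V hmV _
    rw [asc_split n (Finset.Icc 1 r) hA h0 γ _ hiffA hnotA]
    congr 1
    refine Eq.trans (Finset.sum_congr rfl (fun v _ => Finset.sum_congr rfl (fun u _ =>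
      ite_or_add3 Iff.rfl
        (by rintro ⟨⟨f1, f2⟩, (⟨g1, g2⟩ | ⟨g1, g2⟩)⟩ <;> omega)
        (by rintro ⟨⟨f1, f2⟩, ⟨g1, g2⟩⟩; omega) _))) ?_
    simp only [Finset.sum_add_distrib]
    rw [e1, e2, e3]
  have eascB : ∀ γ : {x // x ∈ verts n (Finset.Icc 1 r)} → Finset (Fin N),
      asc n (Finset.Icc 1 r) hB γ = asc n (Finset.Icc 1 r) h0 γ +
        ((γ ⟨j0, hj0V⟩ ×ˢ γ ⟨j, hjV⟩).filter fun ab => ab.1 < ab.2).card := by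
    intro γ
    rw [asc_split n (Finset.Icc 1 r) hB h0 γ _ hiffB hnotB]
    congr 1
    exact sum_ite_pair_val j0 j hj0V hjV _
  have eascC : ∀ γ : {x // x ∈ verts n (Finset.Icc 1 r)} → Finset (Fin N),
      asc n (Finset.Icc 1 r) hC γ = asc n (Finset.Icc 1 r) h0 γ +
        ((γ ⟨j + 1, hj1V⟩ ×ˢ γ ⟨h j, hmV⟩).filter fun ab => ab.1 < ab.2).card := by
    intro γ
    rw [asc_split n (Finset.Icc 1 r) hC h0 γ _ hiffC hnotC]
    congr 1
    exact sum_ite_pair_val (j + 1) (h j) hj1V hmV _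
  -- properness decompositions
  have hisoh : ∀ γ : {x // x ∈ verts n (Finset.Icc 1 r)} → Finset (Fin N),
      IsProper n (Finset.Icc 1 r) h γ ↔ (IsProper n (Finset.Icc 1 r) h0 γ ∧
        (Disjoint (γ ⟨j0, hj0V⟩) (γ ⟨j, hjV⟩) ∧ Disjoint (γ ⟨j, hjV⟩) (γ ⟨h j, hmV⟩) ∧
          Disjoint (γ ⟨j + 1, hj1V⟩) (γ ⟨h j, hmV⟩))) := by
    intro γ
    refine (proper_split n (Finset.Icc 1 r) h h0 γ _ hiffh).trans (and_congr_right fun _ => ?_)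
    constructor
    · intro H
      exact ⟨H _ _ (Or.inl ⟨rfl, rfl⟩), H _ _ (Or.inr (Or.inl ⟨rfl, rfl⟩)),
        H _ _ (Or.inr (Or.inr ⟨rfl, rfl⟩))⟩
    · rintro ⟨d1, d2, d3⟩ v u (⟨e1, e2⟩ | ⟨e1, e2⟩ | ⟨e1, e2⟩)
      · obtain rfl : v = ⟨j0, hj0V⟩ := Subtype.ext e1
        obtain rfl : u = ⟨j, hjV⟩ := Subtype.ext e2
        exact d1
      · obtain rfl : v = ⟨j, hjV⟩ := Subtype.ext e1
        obtain rfl : u = ⟨h j, hmV⟩ := Subtype.ext e2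
        exact d2
      · obtain rfl : v = ⟨j + 1, hj1V⟩ := Subtype.ext e1
        obtain rfl : u = ⟨h j, hmV⟩ := Subtype.ext e2
        exact d3
  have hisoA : ∀ γ : {x // x ∈ verts n (Finset.Icc 1 r)} → Finset (Fin N),
      IsProper n (Finset.Icc 1 r) hA γ ↔ (IsProper n (Finset.Icc 1 r) h0 γ ∧
        (Disjoint (γ ⟨j0, hj0V⟩) (γ ⟨j, hjV⟩) ∧ Disjoint (γ ⟨j0, hj0V⟩) (γ ⟨j + 1, hj1V⟩) ∧
          Disjoint (γ ⟨j + 1, hj1V⟩) (γ ⟨h j, hmV⟩))) := by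
    intro γ
    refine (proper_split n (Finset.Icc 1 r) hA h0 γ _ hiffA).trans (and_congr_right fun _ => ?_)
    constructor
    · intro H
      exact ⟨H _ _ (Or.inl ⟨rfl, rfl⟩), H _ _ (Or.inr (Or.inl ⟨rfl, rfl⟩)),
        H _ _ (Or.inr (Or.inr ⟨rfl, rfl⟩))⟩
    · rintro ⟨d1, d2, d3⟩ v u (⟨e1, e2⟩ | ⟨e1, e2⟩ | ⟨e1, e2⟩)
      · obtain rfl : v = ⟨j0, hj0V⟩ := Subtype.ext e1
        obtain rfl : u = ⟨j, hjV⟩ := Subtype.ext e2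
        exact d1
      · obtain rfl : v = ⟨j0, hj0V⟩ := Subtype.ext e1
        obtain rfl : u = ⟨j + 1, hj1V⟩ := Subtype.ext e2
        exact d2
      · obtain rfl : v = ⟨j + 1, hj1V⟩ := Subtype.ext e1
        obtain rfl : u = ⟨h j, hmV⟩ := Subtype.ext e2
        exact d3
  have hisoB : ∀ γ : {x // x ∈ verts n (Finset.Icc 1 r)} → Finset (Fin N),
      IsProper n (Finset.Icc 1 r) hB γ ↔ (IsProper n (Finset.Icc 1 r) h0 γ ∧
        Disjoint (γ ⟨j0, hj0V⟩) (γ ⟨j, hjV⟩)) := by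
    intro γ
    refine (proper_split n (Finset.Icc 1 r) hB h0 γ _ hiffB).trans (and_congr_right fun _ => ?_)
    constructor
    · intro H
      exact H _ _ ⟨rfl, rfl⟩
    · rintro d1 v u ⟨e1, e2⟩
      obtain rfl : v = ⟨j0, hj0V⟩ := Subtype.ext e1
      obtain rfl : u = ⟨j, hjV⟩ := Subtype.ext e2
      exact d1
  have hisoC : ∀ γ : {x // x ∈ verts n (Finset.Icc 1 r)} → Finset (Fin N),
      IsProper n (Finset.Icc 1 r) hC γ ↔ (IsProper n (Finset.Icc 1 r) h0 γ ∧
        Disjoint (γ ⟨j + 1, hj1V⟩) (γ ⟨h j, hmV⟩)) := by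
    intro γ
    refine (proper_split n (Finset.Icc 1 r) hC h0 γ _ hiffC).trans (and_congr_right fun _ => ?_)
    constructor
    · intro H
      exact H _ _ ⟨rfl, rfl⟩
    · rintro d1 v u ⟨e1, e2⟩
      obtain rfl : v = ⟨j + 1, hj1V⟩ := Subtype.ext e1
      obtain rfl : u = ⟨h j, hmV⟩ := Subtype.ext e2
      exact d1
  -- csf in split form
  have csfH := csf_eq n (Finset.Icc 1 r) h h0 N _ _ hisoh (fun γ _ => eascH γ)
  have csfA := csf_eq n (Finset.Icc 1 r) hA h0 N _ _ hisoA (fun γ _ => eascA γ)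
  have csfB := csf_eq n (Finset.Icc 1 r) hB h0 N _ _ hisoB (fun γ _ => eascB γ)
  have csfC := csf_eq n (Finset.Icc 1 r) hC h0 N _ _ hisoC (fun γ _ => eascC γ)

  -- singleton color helpers
  have cnt_single : ∀ x y : Fin N,
      ((({x} : Finset (Fin N)) ×ˢ ({y} : Finset (Fin N))).filter fun ab => ab.1 < ab.2).card
        = iota x.val y.val := by
    intro x y
    rw [Finset.singleton_product_singleton, Finset.filter_singleton]
    by_cases hxy : x < y
    · rw [if_pos hxy, iota, if_pos (show x.val < y.val from hxy)]
      exact Finset.card_singleton _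
    · rw [if_neg hxy, iota, if_neg (show ¬ x.val < y.val from hxy)]
      exact Finset.card_empty
  have dis_single : ∀ x y : Fin N,
      Disjoint ({x} : Finset (Fin N)) ({y} : Finset (Fin N)) ↔ x.val ≠ y.val :=
    fun x y => Finset.disjoint_singleton.trans Fin.val_ne_iff.symm
  -- the swap
  set sw : Equiv.Perm {x // x ∈ verts n (Finset.Icc 1 r)} :=
    Equiv.swap ⟨j, hjV⟩ ⟨j + 1, hj1V⟩ with hswdef
  have swsw : ∀ v, sw (sw v) = v := by
    intro v; rw [hswdef]; exact Equiv.swap_apply_self _ _ _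
  have swL : sw ⟨j, hjV⟩ = ⟨j + 1, hj1V⟩ := Equiv.swap_apply_left _ _
  have swR : sw ⟨j + 1, hj1V⟩ = ⟨j, hjV⟩ := Equiv.swap_apply_right _ _
  have swO : ∀ v : {x // x ∈ verts n (Finset.Icc 1 r)},
      (v : ℕ) ≠ j → (v : ℕ) ≠ j + 1 → sw v = v := by
    intro v a b
    refine Equiv.swap_apply_of_ne_of_ne ?_ ?_
    · intro e; exact a (congrArg Subtype.val e)
    · intro e; exact b (congrArg Subtype.val e)
  have swv1 : ∀ v : {x // x ∈ verts n (Finset.Icc 1 r)},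
      (v : ℕ) = j → ((sw v : {x // x ∈ verts n (Finset.Icc 1 r)}) : ℕ) = j + 1 := by
    intro v hv; rw [show v = ⟨j, hjV⟩ from Subtype.ext hv, swL]
  have swv2 : ∀ v : {x // x ∈ verts n (Finset.Icc 1 r)},
      (v : ℕ) = j + 1 → ((sw v : {x // x ∈ verts n (Finset.Icc 1 r)}) : ℕ) = j := by
    intro v hv; rw [show v = ⟨j + 1, hj1V⟩ from Subtype.ext hv, swR]
  have swv3 : ∀ v : {x // x ∈ verts n (Finset.Icc 1 r)},
      (v : ℕ) ≠ j → (v : ℕ) ≠ j + 1 → ((sw v : {x // x ∈ verts n (Finset.Icc 1 r)}) : ℕ) = (v : ℕ) := by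
    intro v a b; rw [swO v a b]
  -- key edge-transport fact
  have CK : ∀ v u : {x // x ∈ verts n (Finset.Icc 1 r)},
      (((sw v : {x // x ∈ verts n (Finset.Icc 1 r)}) : ℕ) < ((sw u : {x // x ∈ verts n (Finset.Icc 1 r)}) : ℕ) ∧
        ((sw u : {x // x ∈ verts n (Finset.Icc 1 r)}) : ℕ) ≤ h0 ((sw v : {x // x ∈ verts n (Finset.Icc 1 r)}) : ℕ)) ↔
      ((((v : ℕ) < (u : ℕ) ∧ (u : ℕ) ≤ h0 (v : ℕ)) ∧ ¬((v : ℕ) = j ∧ (u : ℕ) = j + 1)) ∨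
        ((v : ℕ) = j + 1 ∧ (u : ℕ) = j)) := by
    intro v u
    rcases eq_or_ne (v : ℕ) j with hvj | hvj
    · rcases eq_or_ne (u : ℕ) j with huj | huj
      · rw [swv1 v hvj, swv1 u huj, hvj, huj]; omega
      · rcases eq_or_ne (u : ℕ) (j + 1) with huj1 | huj1
        · rw [swv1 v hvj, swv2 u huj1, hvj, huj1]; omega
        · rw [swv1 v hvj, swv3 u huj huj1, hvj, h0j, h0j1]; omega
    · rcases eq_or_ne (v : ℕ) (j + 1) with hvj1 | hvj1
      · rcases eq_or_ne (u : ℕ) j with huj | huj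
        · rw [swv2 v hvj1, swv1 u huj, hvj1, huj, h0j]; omega
        · rcases eq_or_ne (u : ℕ) (j + 1) with huj1 | huj1
          · rw [swv2 v hvj1, swv2 u huj1, hvj1, huj1]; omega
          · rw [swv2 v hvj1, swv3 u huj huj1, hvj1, h0j, h0j1]; omega
      · rcases eq_or_ne (u : ℕ) j with huj | huj
        · rw [swv3 v hvj hvj1, swv1 u huj, huj]
          rcases Nat.lt_or_ge (v : ℕ) j with hlt | hge2
          · have hx := hneJ v hlt; omega
          · omega
        · rcases eq_or_ne (u : ℕ) (j + 1) with huj1 | huj1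
          · rw [swv3 v hvj hvj1, swv2 u huj1, huj1]
            rcases Nat.lt_or_ge (v : ℕ) j with hlt | hge2
            · have hx := hneJ v hlt; omega
            · omega
          · rw [swv3 v hvj hvj1, swv3 u huj huj1]; omega
  -- swap preserves h0-properness
  have hproper0 : ∀ γ : {x // x ∈ verts n (Finset.Icc 1 r)} → Finset (Fin N),
      IsProper n (Finset.Icc 1 r) h0 γ →
        IsProper n (Finset.Icc 1 r) h0 (fun v => γ (sw v)) := by
    rintro γ ⟨hcard, hdis⟩
    constructor
    · intro v
      rcases eq_or_ne (v : ℕ) j with hvj | hvj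
      · obtain rfl : v = ⟨j, hjV⟩ := Subtype.ext hvj
        show (γ (sw ⟨j, hjV⟩)).card = wt n (Finset.Icc 1 r) j
        rw [swL]
        calc (γ ⟨j + 1, hj1V⟩).card = wt n (Finset.Icc 1 r) (j + 1) := hcard ⟨j + 1, hj1V⟩
          _ = 1 := wt_j1
          _ = wt n (Finset.Icc 1 r) j := wt_jj.symm
      · rcases eq_or_ne (v : ℕ) (j + 1) with hvj1 | hvj1
        · obtain rfl : v = ⟨j + 1, hj1V⟩ := Subtype.ext hvj1
          show (γ (sw ⟨j + 1, hj1V⟩)).card = wt n (Finset.Icc 1 r) (j + 1)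
          rw [swR]
          calc (γ ⟨j, hjV⟩).card = wt n (Finset.Icc 1 r) j := hcard ⟨j, hjV⟩
            _ = 1 := wt_jj
            _ = wt n (Finset.Icc 1 r) (j + 1) := wt_j1.symm
        · show (γ (sw v)).card = wt n (Finset.Icc 1 r) (v : ℕ)
          rw [swO v hvj hvj1]
          exact hcard v
    · intro v u h1 h2
      by_cases hp : (v : ℕ) = j ∧ (u : ℕ) = j + 1
      · obtain rfl : v = ⟨j, hjV⟩ := Subtype.ext hp.1
        obtain rfl : u = ⟨j + 1, hj1V⟩ := Subtype.ext hp.2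
        show Disjoint (γ (sw ⟨j, hjV⟩)) (γ (sw ⟨j + 1, hj1V⟩))
        rw [swL, swR]
        exact (hdis ⟨j, hjV⟩ ⟨j + 1, hj1V⟩ (Nat.lt_succ_self j)
          (show j + 1 ≤ h0 j by rw [h0j]; omega)).symm
      · have hc := (CK v u).mpr (Or.inl ⟨⟨h1, h2⟩, hp⟩)
        exact hdis (sw v) (sw u) hc.1 hc.2
  -- ascent statistics under the swap
  have hascsw : ∀ γ : {x // x ∈ verts n (Finset.Icc 1 r)} → Finset (Fin N),
      asc n (Finset.Icc 1 r) h0 (fun v => γ (sw v)) +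
        ((γ ⟨j, hjV⟩ ×ˢ γ ⟨j + 1, hj1V⟩).filter fun ab => ab.1 < ab.2).card
      = asc n (Finset.Icc 1 r) h0 γ +
        ((γ ⟨j + 1, hj1V⟩ ×ˢ γ ⟨j, hjV⟩).filter fun ab => ab.1 < ab.2).card := by
    intro γ
    have pairsum1 : (∑ v : {x // x ∈ verts n (Finset.Icc 1 r)},
        ∑ u : {x // x ∈ verts n (Finset.Icc 1 r)},
        if (v : ℕ) = j ∧ (u : ℕ) = j + 1 then ((γ v ×ˢ γ u).filter fun ab => ab.1 < ab.2).card else 0)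
        = ((γ ⟨j, hjV⟩ ×ˢ γ ⟨j + 1, hj1V⟩).filter fun ab => ab.1 < ab.2).card :=
      sum_ite_pair_val j (j + 1) hjV hj1V _
    have pairsum2 : (∑ v : {x // x ∈ verts n (Finset.Icc 1 r)},
        ∑ u : {x // x ∈ verts n (Finset.Icc 1 r)},
        if (v : ℕ) = j + 1 ∧ (u : ℕ) = j then ((γ v ×ˢ γ u).filter fun ab => ab.1 < ab.2).card else 0)
        = ((γ ⟨j + 1, hj1V⟩ ×ˢ γ ⟨j, hjV⟩).filter fun ab => ab.1 < ab.2).card :=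
      sum_ite_pair_val (j + 1) j hj1V hjV _
    have step1 : asc n (Finset.Icc 1 r) h0 (fun v => γ (sw v)) =
        ∑ v : {x // x ∈ verts n (Finset.Icc 1 r)},
        ∑ u : {x // x ∈ verts n (Finset.Icc 1 r)},
        (if ((sw v : {x // x ∈ verts n (Finset.Icc 1 r)}) : ℕ) < ((sw u : {x // x ∈ verts n (Finset.Icc 1 r)}) : ℕ) ∧
            ((sw u : {x // x ∈ verts n (Finset.Icc 1 r)}) : ℕ) ≤ h0 ((sw v : {x // x ∈ verts n (Finset.Icc 1 r)}) : ℕ)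
          then ((γ v ×ˢ γ u).filter fun ab => ab.1 < ab.2).card else 0) := by
      refine Fintype.sum_equiv sw _ _ fun v => ?_
      refine Fintype.sum_equiv sw _ _ fun u => ?_
      rw [swsw, swsw]
    rw [step1, ← pairsum1, ← pairsum2,
      show asc n (Finset.Icc 1 r) h0 γ = ∑ v : {x // x ∈ verts n (Finset.Icc 1 r)},
        ∑ u : {x // x ∈ verts n (Finset.Icc 1 r)},
        (if (v : ℕ) < (u : ℕ) ∧ (u : ℕ) ≤ h0 (v : ℕ)
          then ((γ v ×ˢ γ u).filter fun ab => ab.1 < ab.2).card else 0) from rfl]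
    rw [← Finset.sum_add_distrib, ← Finset.sum_add_distrib]
    refine Finset.sum_congr rfl fun v _ => ?_
    rw [← Finset.sum_add_distrib, ← Finset.sum_add_distrib]
    refine Finset.sum_congr rfl fun u _ => ?_
    refine ite_sw (CK v u) ?_ ?_ ?_ _
    · rintro ⟨e1, e2⟩
      rw [e1, e2, h0j]
      omega
    · rintro ⟨e1, e2⟩ ⟨hc1, _⟩
      omega
    · rintro ⟨⟨e1, _⟩, ⟨f1, _⟩⟩
      omega
  -- assemble
  rw [csfH, csfA, csfB, csfC, ← sub_eq_zero]
  rw [Finset.mul_sum, Finset.mul_sum]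
  rw [← Finset.sum_sub_distrib, ← Finset.sum_add_distrib, ← Finset.sum_sub_distrib]
  refine Finset.sum_involution (fun γ _ => fun v => γ (sw v)) ?_ ?_ ?_ ?_
  · -- the local identity
    intro γ hγ
    obtain ⟨hcard, hdis⟩ := (Finset.mem_filter.mp hγ).2
    have c0 : (γ ⟨j0, hj0V⟩).card = 1 := (hcard ⟨j0, hj0V⟩).trans wt_j0
    have c1 : (γ ⟨j, hjV⟩).card = 1 := (hcard ⟨j, hjV⟩).trans wt_jj
    have c2 : (γ ⟨j + 1, hj1V⟩).card = 1 := (hcard ⟨j + 1, hj1V⟩).trans wt_j1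
    have c3 : (γ ⟨h j, hmV⟩).card = 1 := (hcard ⟨h j, hmV⟩).trans wt_m
    obtain ⟨a, ha⟩ := Finset.card_eq_one.mp c0
    obtain ⟨b, hb⟩ := Finset.card_eq_one.mp c1
    obtain ⟨c, hc⟩ := Finset.card_eq_one.mp c2
    obtain ⟨d, hd⟩ := Finset.card_eq_one.mp c3
    have hbd : b.val ≠ c.val := by
      have hx := hdis ⟨j, hjV⟩ ⟨j + 1, hj1V⟩ (Nat.lt_succ_self j)
        (show j + 1 ≤ h0 j by rw [h0j]; omega)
      rw [hb, hc, dis_single] at hx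
      exact hx
    have hss := hascsw γ
    rw [hb, hc, cnt_single, cnt_single] at hss
    have swJ0 : sw ⟨j0, hj0V⟩ = ⟨j0, hj0V⟩ :=
      swO _ (show j0 ≠ j by omega) (show j0 ≠ j + 1 by omega)
    have swM : sw ⟨h j, hmV⟩ = ⟨h j, hmV⟩ :=
      swO _ (show h j ≠ j by omega) (show h j ≠ j + 1 by omega)
    have monoEq : (∏ v : {x // x ∈ verts n (Finset.Icc 1 r)}, ∏ x ∈ γ (sw v), MvPolynomial.X (R := ℤ) x)
        = ∏ v : {x // x ∈ verts n (Finset.Icc 1 r)}, ∏ x ∈ γ v, MvPolynomial.X x :=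
      Equiv.prod_comp sw (fun v => ∏ x ∈ γ v, MvPolynomial.X (R := ℤ) x)
    simp only [swJ0, swL, swR, swM]
    rw [monoEq, ha, hb, hc, hd]
    simp only [cnt_single, dis_single]
    rw [ite3_chi, ite3_chi, ite3_chi, ite3_chi, ite1_chi, ite1_chi, ite1_chi, ite1_chi]
    have LI := local_id Polynomial.X
      (Polynomial.C (∏ v : {x // x ∈ verts n (Finset.Icc 1 r)}, ∏ x ∈ γ v, MvPolynomial.X (R := ℤ) x))
      a.val b.val c.val d.val hbd
      (asc n (Finset.Icc 1 r) h0 γ) (asc n (Finset.Icc 1 r) h0 (fun v => γ (sw v))) hss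
    unfold G1 at LI
    linear_combination LI
  · -- no fixed points
    intro γ hγ _
    intro heq
    have hdis := ((Finset.mem_filter.mp hγ).2).2 ⟨j, hjV⟩ ⟨j + 1, hj1V⟩ (Nat.lt_succ_self j)
      (show j + 1 ≤ h0 j by rw [h0j]; omega)
    have hcards : (γ ⟨j, hjV⟩).card = 1 := (((Finset.mem_filter.mp hγ).2).1 ⟨j, hjV⟩).trans wt_jj
    have he : γ ⟨j + 1, hj1V⟩ = γ ⟨j, hjV⟩ := by
      have hcf := congrFun heq ⟨j, hjV⟩
      simp only [swL] at hcf
      exact hcf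
    rw [he] at hdis
    have hempty : γ ⟨j, hjV⟩ = ⊥ := disjoint_self.mp hdis
    rw [hempty] at hcards
    simp [Finset.bot_eq_empty] at hcards
  · -- membership
    intro γ hγ
    exact Finset.mem_filter.mpr ⟨Finset.mem_univ _, hproper0 γ (Finset.mem_filter.mp hγ).2⟩
  · -- involutive
    intro γ hγ
    funext v
    show γ (sw (sw v)) = γ v
    rw [swsw]
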